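/- arXiv:2106.09379 — 3 statements merged into one kernel-verified Lean document; each statement's English description precedes it below -/
import Mathlib

section
/- Under the factorization M_l(ξ) = M⁽¹⁾(ξ) ⊗ M⁽²⁾ with M⁽¹⁾(ξ) and M⁽²⁾ positive definite, and c_l = c_l⁰ · (f⁽¹⁾(x_u) ⊗ g(t_α)) for scalars c_l⁰, the c-optimality criterion satisfies Σ_{l=1}^r c_lᵀ M_l(ξ)⁻¹ c_l = (Σ_{l=1}^r (c_l⁰)² · g(t_α)ᵀ (M⁽²⁾)⁻¹ g(t_α)) · f⁽¹⁾(x_u)ᵀ (M⁽¹⁾(ξ))⁻¹ f⁽¹⁾(x_u). In particular, a design ξ minimizing f⁽¹⁾(x_u)ᵀ M⁽¹⁾(ξ)⁻¹ f⁽¹⁾(x_u) minimizes the full criterion. -/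
open Matrix Kronecker

namespace Matrix

variable {l m n p R : Type*} [CommSemiring R] [Fintype m] [Fintype n]

theorem kronecker_mulVec_kronecker (A : Matrix l m R) (B : Matrix p n R) (u : m → R)
    (v : n → R) :
    (A ⊗ₖ B) *ᵥ (fun q : m × n => u q.1 * v q.2) = fun q => (A *ᵥ u) q.1 * (B *ᵥ v) q.2 := by
  ext q
  simp only [mulVec, dotProduct, kroneckerMap_apply, Fintype.sum_prod_type, Finset.sum_mul_sum]
  exact Finset.sum_congr rfl fun i _ => Finset.sum_congr rfl fun j _ => by ring

theorem kronecker_dotProduct_kronecker (u u' : m → R) (v v' : n → R) :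
    (fun q : m × n => u q.1 * v q.2) ⬝ᵥ (fun q => u' q.1 * v' q.2) = (u ⬝ᵥ u') * (v ⬝ᵥ v') := by
  simp only [dotProduct, Fintype.sum_prod_type, Finset.sum_mul_sum]
  exact Finset.sum_congr rfl fun i _ => Finset.sum_congr rfl fun j _ => by ring

theorem kronecker_dotProduct_kronecker_mulVec_kronecker (A : Matrix m m R) (B : Matrix n n R)
    (u : m → R) (v : n → R) :
    (fun q : m × n => u q.1 * v q.2) ⬝ᵥ (A ⊗ₖ B) *ᵥ (fun q => u q.1 * v q.2)
      = (u ⬝ᵥ A *ᵥ u) * (v ⬝ᵥ B *ᵥ v) := by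
  rw [kronecker_mulVec_kronecker, kronecker_dotProduct_kronecker]

end Matrix

theorem factorized_c_criterion_and_optimality_general
    {Ξ : Type*} {r a b : ℕ}
    (M1 : Ξ → Matrix (Fin a) (Fin a) ℝ)
    (M2 : Matrix (Fin b) (Fin b) ℝ) (hM2 : M2.PosDef)
    (u : Fin a → ℝ) (v : Fin b → ℝ)  -- u = f⁽¹⁾(x_u), v = g(t_α)
    (c0 : Fin r → ℝ)
    (c : Fin r → (Fin a × Fin b → ℝ))
    (hc : ∀ l q, c l q = c0 l * (u q.1 * v q.2)) :
    (∀ ξ : Ξ,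
      ∑ l : Fin r, c l ⬝ᵥ ((M1 ξ) ⊗ₖ M2)⁻¹.mulVec (c l)
        = (∑ l : Fin r, (c0 l) ^ 2 * (v ⬝ᵥ M2⁻¹.mulVec v)) *
            (u ⬝ᵥ (M1 ξ)⁻¹.mulVec u)) ∧
    (∀ ξopt : Ξ, (∀ ξ, u ⬝ᵥ (M1 ξopt)⁻¹.mulVec u ≤ u ⬝ᵥ (M1 ξ)⁻¹.mulVec u) →
      ∀ ξ, ∑ l : Fin r, c l ⬝ᵥ ((M1 ξopt) ⊗ₖ M2)⁻¹.mulVec (c l)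
            ≤ ∑ l : Fin r, c l ⬝ᵥ ((M1 ξ) ⊗ₖ M2)⁻¹.mulVec (c l)) := by
  have hc_smul : ∀ l, c l = c0 l • fun q : Fin a × Fin b => u q.1 * v q.2 :=
    fun l => funext (hc l)
  have factorization : ∀ ξ, ∑ l, c l ⬝ᵥ (M1 ξ ⊗ₖ M2)⁻¹ *ᵥ c l
      = (∑ l, c0 l ^ 2 * (v ⬝ᵥ M2⁻¹ *ᵥ v)) * (u ⬝ᵥ (M1 ξ)⁻¹ *ᵥ u) := by
    intro ξ
    rw [inv_kronecker, Finset.sum_mul]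
    refine Finset.sum_congr rfl fun l _ => ?_
    rw [hc_smul, mulVec_smul, smul_dotProduct, dotProduct_smul,
      kronecker_dotProduct_kronecker_mulVec_kronecker, smul_eq_mul, smul_eq_mul]
    ring
  have weight_nonneg : 0 ≤ ∑ l, c0 l ^ 2 * (v ⬝ᵥ M2⁻¹ *ᵥ v) :=
    Finset.sum_nonneg fun l _ =>
      mul_nonneg (sq_nonneg _) (by simpa using hM2.inv.posSemidef.dotProduct_mulVec_nonneg v)
  refine ⟨factorization, fun ξopt hopt ξ => ?_⟩
  rw [factorization, factorization]
  exact mul_le_mul_of_nonneg_left (hopt ξ) weight_nonneg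

/-- Theorem 1 of the paper: Under the factorization
`M_l(ξ) = M⁽¹⁾(ξ) ⊗ M⁽²⁾` with `M⁽¹⁾(ξ)`, `M⁽²⁾` positive definite, and
`c_l = c_l⁰ · (f⁽¹⁾(x_u) ⊗ g(t_α))`, the c-optimality criterion factorizes:
`Σ_l c_lᵀ M_l(ξ)⁻¹ c_l = (Σ_l (c_l⁰)² g(t_α)ᵀ(M⁽²⁾)⁻¹g(t_α)) ·
f⁽¹⁾(x_u)ᵀ(M⁽¹⁾(ξ))⁻¹f⁽¹⁾(x_u)`; in particular a design minimizing
`f⁽¹⁾(x_u)ᵀ M⁽¹⁾(ξ)⁻¹ f⁽¹⁾(x_u)` minimizes the full criterion. -/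
theorem factorized_c_criterion_and_optimality
    {Ξ : Type*} {r a b : ℕ}
    (M1 : Ξ → Matrix (Fin a) (Fin a) ℝ) (hM1 : ∀ ξ, (M1 ξ).PosDef)
    (M2 : Matrix (Fin b) (Fin b) ℝ) (hM2 : M2.PosDef)
    (u : Fin a → ℝ) (v : Fin b → ℝ)  -- u = f⁽¹⁾(x_u), v = g(t_α)
    (c0 : Fin r → ℝ)
    (c : Fin r → (Fin a × Fin b → ℝ))
    (hc : ∀ l q, c l q = c0 l * (u q.1 * v q.2)) :
    (∀ ξ : Ξ,
      ∑ l : Fin r, c l ⬝ᵥ ((M1 ξ) ⊗ₖ M2)⁻¹.mulVec (c l)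
        = (∑ l : Fin r, (c0 l) ^ 2 * (v ⬝ᵥ M2⁻¹.mulVec v)) *
            (u ⬝ᵥ (M1 ξ)⁻¹.mulVec u)) ∧
    (∀ ξopt : Ξ, (∀ ξ, u ⬝ᵥ (M1 ξopt)⁻¹.mulVec u ≤ u ⬝ᵥ (M1 ξ)⁻¹.mulVec u) →
      ∀ ξ, ∑ l : Fin r, c l ⬝ᵥ ((M1 ξopt) ⊗ₖ M2)⁻¹.mulVec (c l)
            ≤ ∑ l : Fin r, c l ⬝ᵥ ((M1 ξ) ⊗ₖ M2)⁻¹.mulVec (c l)) :=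
  factorized_c_criterion_and_optimality_general M1 M2 hM2 u v c0 c hc
end

section
/- In the simple linear regression model with f(x) = (1, x)ᵀ on the design region [0,1], the c-optimal approximate design for extrapolation at a point x_u < 0 (i.e., minimizing f(x_u)ᵀ M(ξ)⁻¹ f(x_u) over designs ξ with M(ξ) nonsingular) is the two-point design supported on {0, 1} with weight w* = |x_u|/(1 + 2|x_u|) at x = 1 and weight 1 − w* = (1 + |x_u|)/(1 + 2|x_u|) at x = 0. -/
/-!
Elfving-type lower bound: put `a = (1, -2)`, so that `|aᵀ f(x)| = |1 - 2x| ≤ 1` on `[0, 1]` and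
hence `aᵀ M a ≤ 1` for every design. Cauchy–Schwarz for the semi-inner product `M` applied to `a`
and `y = M⁻¹ f(x_u)` gives `(aᵀ f(x_u))² ≤ (aᵀ M a) (f(x_u)ᵀ M⁻¹ f(x_u)) ≤ f(x_u)ᵀ M⁻¹ f(x_u)`,
with `aᵀ f(x_u) = 1 + 2|x_u|`. For the two-point design `M* ((1 + 2|x_u|) a) = f(x_u)`, so its
variance is `(1 + 2|x_u|)²` and the bound is attained.
-/

open Matrix

def informationMatrix {κ ι : Type*} [Fintype κ] (w : κ → ℝ) (g : κ → ι → ℝ) : Matrix ι ι ℝ :=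
  ∑ k, w k • vecMulVec (g k) (g k)

section InformationMatrix

variable {κ ι : Type*} [Fintype κ] [Fintype ι] {w : κ → ℝ} {g : κ → ι → ℝ}

theorem dotProduct_informationMatrix_mulVec (a y : ι → ℝ) :
    a ⬝ᵥ informationMatrix w g *ᵥ y = ∑ k, w k * ((g k ⬝ᵥ a) * (g k ⬝ᵥ y)) := by
  simp only [informationMatrix, sum_mulVec, smul_mulVec, vecMulVec_mulVec, dotProduct_sum,
    dotProduct_smul, op_smul_eq_smul, smul_eq_mul]
  exact Finset.sum_congr rfl fun k _ => by rw [dotProduct_comm a]; ring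

theorem sq_dotProduct_informationMatrix_mulVec_le (hw : ∀ k, 0 ≤ w k) (a y : ι → ℝ) :
    (a ⬝ᵥ informationMatrix w g *ᵥ y) ^ 2 ≤
      (a ⬝ᵥ informationMatrix w g *ᵥ a) * (y ⬝ᵥ informationMatrix w g *ᵥ y) := by
  simp only [dotProduct_informationMatrix_mulVec]
  exact Finset.sum_sq_le_sum_mul_sum_of_sq_le_mul _
    (fun k _ => mul_nonneg (hw k) (mul_self_nonneg _))
    (fun k _ => mul_nonneg (hw k) (mul_self_nonneg _)) (fun k _ => le_of_eq (by ring))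

theorem dotProduct_informationMatrix_mulVec_le_one (hw : ∀ k, 0 ≤ w k) (hsum : ∑ k, w k = 1)
    {a : ι → ℝ} (ha : ∀ k, |g k ⬝ᵥ a| ≤ 1) :
    a ⬝ᵥ informationMatrix w g *ᵥ a ≤ 1 := by
  rw [dotProduct_informationMatrix_mulVec, ← hsum]
  refine Finset.sum_le_sum fun k _ => mul_le_of_le_one_right (hw k) ?_
  rw [← abs_mul_self, abs_mul]
  exact mul_le_one₀ (ha k) (abs_nonneg _) (ha k)

theorem sq_dotProduct_le_dotProduct_inv_mulVec [DecidableEq ι] (hw : ∀ k, 0 ≤ w k)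
    (hsum : ∑ k, w k = 1) {a : ι → ℝ} (ha : ∀ k, |g k ⬝ᵥ a| ≤ 1)
    (hdet : (informationMatrix w g).det ≠ 0) (c : ι → ℝ) :
    (a ⬝ᵥ c) ^ 2 ≤ c ⬝ᵥ (informationMatrix w g)⁻¹ *ᵥ c := by
  set M := informationMatrix w g
  set y := M⁻¹ *ᵥ c
  have hMy : M *ᵥ y = c := by
    rw [mulVec_mulVec, mul_nonsing_inv M (isUnit_iff_ne_zero.mpr hdet), one_mulVec]
  have hyMy : y ⬝ᵥ M *ᵥ y = c ⬝ᵥ y := by rw [hMy, dotProduct_comm]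
  have hvar_nonneg : 0 ≤ c ⬝ᵥ y := by
    rw [← hyMy, dotProduct_informationMatrix_mulVec]
    exact Finset.sum_nonneg fun k _ => mul_nonneg (hw k) (mul_self_nonneg _)
  calc (a ⬝ᵥ c) ^ 2 = (a ⬝ᵥ M *ᵥ y) ^ 2 := by rw [hMy]
    _ ≤ (a ⬝ᵥ M *ᵥ a) * (y ⬝ᵥ M *ᵥ y) := sq_dotProduct_informationMatrix_mulVec_le hw a y
    _ ≤ 1 * (c ⬝ᵥ y) := by
      rw [hyMy]
      exact mul_le_mul_of_nonneg_right
        (dotProduct_informationMatrix_mulVec_le_one hw hsum ha) hvar_nonneg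
    _ = c ⬝ᵥ y := one_mul _

end InformationMatrix

theorem dotProduct_inv_mulVec_eq_of_mulVec_eq {ι : Type*} [Fintype ι] [DecidableEq ι]
    {M : Matrix ι ι ℝ} (hdet : M.det ≠ 0) {y c : ι → ℝ} (h : M *ᵥ y = c) :
    c ⬝ᵥ M⁻¹ *ᵥ c = c ⬝ᵥ y := by
  rw [← h, mulVec_mulVec, nonsing_inv_mul M (isUnit_iff_ne_zero.mpr hdet), one_mulVec]

theorem twoPointInformationMatrix_eq (w : ℝ) :
    (1 - w) • vecMulVec ![1, 0] ![1, 0] + w • vecMulVec ![1, 1] ![1, 1] =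
      !![1, w; w, w] := by
  ext i j; fin_cases i <;> fin_cases j <;> simp

theorem abs_dotProduct_one_neg_two_le_one {x : ℝ} (hx : x ∈ Set.Icc (0 : ℝ) 1) :
    |![1, x] ⬝ᵥ ![1, -2]| ≤ 1 := by
  rw [vec2_dotProduct', abs_le]
  constructor <;> linarith [hx.1, hx.2]

/-- In simple linear regression `f(x) = (1, x)ᵀ` on `[0,1]`, the c-optimal
approximate design for extrapolation at `x_u < 0` is supported on `{0, 1}` with weight
`w* = |x_u|/(1 + 2|x_u|)` at `x = 1` and `1 − w* = (1 + |x_u|)/(1 + 2|x_u|)` at `x = 0`: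
its information matrix is nonsingular and, for any approximate design on `[0,1]` with
nonsingular information matrix, the extrapolation variance `f(x_u)ᵀ M(ξ)⁻¹ f(x_u)` is at
least that of the optimal two-point design. -/
theorem c_optimal_extrapolation_design_simple_linear
    (xu : ℝ) (hxu : xu < 0)
    (f : ℝ → Fin 2 → ℝ) (hf : ∀ x, f x = ![1, x])
    (wstar : ℝ) (hwstar : wstar = |xu| / (1 + 2 * |xu|))
    (Mstar : Matrix (Fin 2) (Fin 2) ℝ)
    (hMstar : Mstar = (1 - wstar) • Matrix.vecMulVec (f 0) (f 0)
        + wstar • Matrix.vecMulVec (f 1) (f 1)) :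
    Mstar.det ≠ 0 ∧
    wstar = |xu| / (1 + 2 * |xu|) ∧ 1 - wstar = (1 + |xu|) / (1 + 2 * |xu|) ∧
    ∀ (m : ℕ) (x : Fin m → ℝ) (w : Fin m → ℝ),
      (∀ i, x i ∈ Set.Icc (0 : ℝ) 1) → (∀ i, 0 ≤ w i) → ∑ i, w i = 1 →
      ∀ M : Matrix (Fin 2) (Fin 2) ℝ,
        M = ∑ i, w i • Matrix.vecMulVec (f (x i)) (f (x i)) →
        M.det ≠ 0 →
        f xu ⬝ᵥ Mstar⁻¹.mulVec (f xu) ≤ f xu ⬝ᵥ M⁻¹.mulVec (f xu) := by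
  obtain rfl : f = fun x => ![1, x] := funext hf
  obtain ⟨t, ht, rfl⟩ : ∃ t, 0 < t ∧ xu = -t := ⟨-xu, neg_pos.mpr hxu, (neg_neg xu).symm⟩
  rw [abs_neg, abs_of_pos ht] at hwstar ⊢
  have hcompl : 1 - wstar = (1 + t) / (1 + 2 * t) := by
    rw [hwstar]; field_simp; ring
  have hMstar' : Mstar = !![1, wstar; wstar, wstar] :=
    hMstar.trans (twoPointInformationMatrix_eq wstar)
  have hdet : Mstar.det ≠ 0 := by
    rw [hMstar', det_fin_two_of, show 1 * wstar - wstar * wstar = wstar * (1 - wstar) by ring,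
      hcompl, hwstar]
    positivity
  refine ⟨hdet, hwstar, hcompl, ?_⟩
  intro m x w hx hw hsum M hM hMdet
  subst hM
  have hopt : Mstar *ᵥ ((1 + 2 * t) • ![1, -2]) = ![1, -t] := by
    rw [hMstar', smul_vec2, mulVec_fin_two]
    refine vec2_eq ?_ ?_ <;>
      simp only [of_apply, cons_val', cons_val_zero, cons_val_one, cons_val_fin_one] <;>
      rw [hwstar] <;> field_simp <;> ring
  calc ![1, -t] ⬝ᵥ Mstar⁻¹ *ᵥ ![1, -t] = (![1, -2] ⬝ᵥ ![1, -t]) ^ 2 := by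
        rw [dotProduct_inv_mulVec_eq_of_mulVec_eq hdet hopt, dotProduct_smul, vec2_dotProduct',
          vec2_dotProduct', smul_eq_mul]
        ring
    _ ≤ _ := sq_dotProduct_le_dotProduct_inv_mulVec (g := fun i => ![1, x i]) hw hsum
        (fun i => abs_dotProduct_one_neg_two_le_one (hx i)) hMdet _
end

section
/- If ξ₁* is c-optimal for extrapolation at x_{u1} in the marginal model f₁ (minimizing f₁(x_{u1})ᵀM₁(ξ₁)⁻¹f₁(x_{u1})) and ξ₂* is c-optimal for extrapolation at x_{u2} in the marginal model f₂, and if the optimal value over product designs equals the optimal value over all designs, then for product designs the criterion satisfies f(x_u)ᵀ M(ξ₁ ⊗ ξ₂)⁻¹ f(x_u) = (f₁(x_{u1})ᵀM₁(ξ₁)⁻¹f₁(x_{u1})) · (f₂(x_{u2})ᵀM₂(ξ₂)⁻¹f₂(x_{u2})), where f(x_u) = f₁(x_{u1}) ⊗ f₂(x_{u2}); hence ξ₁* ⊗ ξ₂* minimizes the criterion among all product designs. -/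
open Matrix Kronecker

namespace Matrix

variable {R l m n p : Type*}

def kroneckerVec [Mul R] (x : m → R) (y : n → R) : m × n → R := fun q => x q.1 * y q.2

variable [CommSemiring R] [Fintype m] [Fintype n]

theorem kronecker_mulVec_kroneckerVec (A : Matrix l m R) (B : Matrix p n R) (x : m → R)
    (y : n → R) : (A ⊗ₖ B) *ᵥ kroneckerVec x y = kroneckerVec (A *ᵥ x) (B *ᵥ y) := by
  ext ⟨i, j⟩
  simp only [kroneckerVec, mulVec, dotProduct, kroneckerMap_apply, Fintype.sum_prod_type,
    Finset.sum_mul_sum]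
  exact Finset.sum_congr rfl fun _ _ => Finset.sum_congr rfl fun _ _ => by ring

theorem kroneckerVec_dotProduct_kroneckerVec (x x' : m → R) (y y' : n → R) :
    kroneckerVec x y ⬝ᵥ kroneckerVec x' y' = (x ⬝ᵥ x') * (y ⬝ᵥ y') := by
  simp only [kroneckerVec, dotProduct, Fintype.sum_prod_type, Finset.sum_mul_sum]
  exact Finset.sum_congr rfl fun _ _ => Finset.sum_congr rfl fun _ _ => by ring

theorem kroneckerVec_dotProduct_kronecker_mulVec (A : Matrix m m R) (B : Matrix n n R)
    (x : m → R) (y : n → R) :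
    kroneckerVec x y ⬝ᵥ (A ⊗ₖ B) *ᵥ kroneckerVec x y = (x ⬝ᵥ A *ᵥ x) * (y ⬝ᵥ B *ᵥ y) := by
  rw [kronecker_mulVec_kroneckerVec, kroneckerVec_dotProduct_kroneckerVec]

end Matrix

/-- In the Kronecker product model with extrapolation point
`x_u = (x_{u1}, x_{u2})`, `f(x_u) = f₁(x_{u1}) ⊗ f₂(x_{u2})`, and product designs with
information matrices `M(ξ₁ ⊗ ξ₂) = M₁(ξ₁) ⊗ M₂(ξ₂)`: the criterion factorizes,
`f(x_u)ᵀ M(ξ₁ ⊗ ξ₂)⁻¹ f(x_u) =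
(f₁(x_{u1})ᵀM₁(ξ₁)⁻¹f₁(x_{u1})) · (f₂(x_{u2})ᵀM₂(ξ₂)⁻¹f₂(x_{u2}))`, and hence if `ξ₁*`
and `ξ₂*` are c-optimal for extrapolation in the marginal models, the product design
`ξ₁* ⊗ ξ₂*` minimizes the criterion among all product designs. -/
theorem product_design_c_optimality
    {Ξ₁ Ξ₂ : Type*} {a b : ℕ}
    (M1 : Ξ₁ → Matrix (Fin a) (Fin a) ℝ) (hM1 : ∀ ξ, (M1 ξ).PosDef)
    (M2 : Ξ₂ → Matrix (Fin b) (Fin b) ℝ) (hM2 : ∀ ξ, (M2 ξ).PosDef)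
    (u : Fin a → ℝ) (v : Fin b → ℝ)  -- u = f₁(x_{u1}), v = f₂(x_{u2})
    (fxu : Fin a × Fin b → ℝ) (hfxu : ∀ q, fxu q = u q.1 * v q.2) :
    (∀ (ξ₁ : Ξ₁) (ξ₂ : Ξ₂),
      fxu ⬝ᵥ ((M1 ξ₁) ⊗ₖ (M2 ξ₂))⁻¹.mulVec fxu
        = (u ⬝ᵥ (M1 ξ₁)⁻¹.mulVec u) * (v ⬝ᵥ (M2 ξ₂)⁻¹.mulVec v)) ∧
    (∀ (ξ₁opt : Ξ₁) (ξ₂opt : Ξ₂),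
      (∀ ξ₁, u ⬝ᵥ (M1 ξ₁opt)⁻¹.mulVec u ≤ u ⬝ᵥ (M1 ξ₁)⁻¹.mulVec u) →
      (∀ ξ₂, v ⬝ᵥ (M2 ξ₂opt)⁻¹.mulVec v ≤ v ⬝ᵥ (M2 ξ₂)⁻¹.mulVec v) →
      ∀ (ξ₁ : Ξ₁) (ξ₂ : Ξ₂),
        fxu ⬝ᵥ ((M1 ξ₁opt) ⊗ₖ (M2 ξ₂opt))⁻¹.mulVec fxu
          ≤ fxu ⬝ᵥ ((M1 ξ₁) ⊗ₖ (M2 ξ₂))⁻¹.mulVec fxu) := by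
  obtain rfl : fxu = kroneckerVec u v := funext hfxu
  have factor : ∀ ξ₁ ξ₂, kroneckerVec u v ⬝ᵥ ((M1 ξ₁) ⊗ₖ (M2 ξ₂))⁻¹.mulVec (kroneckerVec u v)
      = (u ⬝ᵥ (M1 ξ₁)⁻¹.mulVec u) * (v ⬝ᵥ (M2 ξ₂)⁻¹.mulVec v) := fun ξ₁ ξ₂ => by
    rw [inv_kronecker, kroneckerVec_dotProduct_kronecker_mulVec]
  refine ⟨factor, fun ξ₁opt ξ₂opt h1 h2 ξ₁ ξ₂ => ?_⟩
  rw [factor, factor]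
  exact mul_le_mul (h1 ξ₁) (h2 ξ₂) ((hM2 ξ₂opt).inv.posSemidef.dotProduct_mulVec_nonneg v)
    ((hM1 ξ₁).inv.posSemidef.dotProduct_mulVec_nonneg u)
end
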